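/- arXiv:1504.00540 — 5 statements merged into one kernel-verified Lean document; each statement's English description precedes it below -/
import Mathlib

section
/- Let A be a bounded linear operator on a complex Banach space Y, ε > 0, and suppose λ ∈ ℂ is such that A − λI is invertible with ‖(A − λI)⁻¹‖ > 1/ε. Then there exists a bounded linear operator K on Y of rank at most 1 with ‖K‖ < ε such that λ is in the spectrum of A + K. -/
/-!
Pick `x` in the unit ball with `‖(A - λI)⁻¹ x‖ > 1/ε` and put `y = (A - λI)⁻¹ x`, so that
`(A - λI) y = x` and `‖x‖ / ‖y‖ < ε`. By Hahn–Banach there is a functional `φ` with `φ y = 1` and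
`‖φ‖ = ‖y‖⁻¹`; then `K z = -φ z • x` has rank one, `‖K‖ = ‖x‖ / ‖y‖ < ε`, and `y` is an
eigenvector of `A + K` for the eigenvalue `λ`.
-/

open ContinuousLinearMap

theorem ContinuousLinearMap.mem_spectrum_of_apply_eq_smul {R M : Type*} [CommRing R]
    [TopologicalSpace M] [AddCommGroup M] [Module R M] [IsTopologicalAddGroup M]
    [ContinuousConstSMul R M] {B : M →L[R] M} {μ : R} {y : M} (hy : y ≠ 0)
    (h : B y = μ • y) : μ ∈ spectrum R B := by
  have hμ : Module.End.HasEigenvalue (B : M →ₗ[R] M) μ :=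
    Module.End.hasEigenvalue_of_hasEigenvector ⟨Module.End.mem_eigenspace_iff.2 h, hy⟩
  intro hunit
  apply hμ.mem_spectrum
  rw [spectrum.mem_resolventSet_iff]
  simpa [Algebra.algebraMap_eq_smul_one] using hunit.map (toLinearMapRingHom (R₁ := R) (M₁ := M))

theorem exists_dual_apply_eq_one_norm_eq_inv {𝕜 E : Type*} [RCLike 𝕜] [NormedAddCommGroup E]
    [NormedSpace 𝕜 E] {y : E} (hy : y ≠ 0) :
    ∃ φ : StrongDual 𝕜 E, φ y = 1 ∧ ‖φ‖ = ‖y‖⁻¹ := by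
  obtain ⟨g, hg, hgy⟩ := exists_dual_vector 𝕜 y (norm_ne_zero_iff.2 hy)
  have hy' : (‖y‖ : 𝕜) ≠ 0 := by exact_mod_cast norm_ne_zero_iff.2 hy
  refine ⟨(‖y‖ : 𝕜)⁻¹ • g, ?_, ?_⟩
  · rw [smul_apply, hgy, smul_eq_mul, inv_mul_cancel₀ hy']
  · rw [norm_smul, hg, mul_one, norm_inv, RCLike.norm_ofReal, abs_norm]

theorem exists_rank_one_perturbation_of_pseudospectrum_general
    {Y : Type*} [NormedAddCommGroup Y] [NormedSpace ℂ Y]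
    (A : Y →L[ℂ] Y) (ε : ℝ) (hε : 0 < ε) (lam : ℂ)
    (hu : IsUnit (A - lam • (1 : Y →L[ℂ] Y)))
    (hn : 1 / ε < ‖Ring.inverse (A - lam • (1 : Y →L[ℂ] Y))‖) :
    ∃ K : Y →L[ℂ] Y,
      (∃ (φ : Y →L[ℂ] ℂ) (u : Y), ∀ x, K x = φ x • u) ∧
      ‖K‖ < ε ∧ lam ∈ spectrum ℂ (A + K) := by
  set T := A - lam • (1 : Y →L[ℂ] Y)
  obtain ⟨x, hx, hTx⟩ := (Ring.inverse T).exists_lt_apply_of_lt_opNorm hn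
  set y := Ring.inverse T x
  have hTy : A y - lam • y = x := by
    simpa [T] using congrArg (· x) (Ring.mul_inverse_cancel T hu)
  have hy : 0 < ‖y‖ := (one_div_pos.2 hε).trans hTx
  obtain ⟨φ, hφy, hφ⟩ := exists_dual_apply_eq_one_norm_eq_inv (𝕜 := ℂ) (norm_pos_iff.1 hy)
  refine ⟨φ.smulRight (-x), ⟨φ, -x, fun _ => rfl⟩, ?_, ?_⟩
  · rw [norm_smulRight_apply, hφ, norm_neg, inv_mul_lt_iff₀ hy]
    calc ‖x‖ < 1 := hx
      _ < ‖y‖ * ε := by rwa [one_div, inv_lt_iff_one_lt_mul₀ hε] at hTx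
  · refine mem_spectrum_of_apply_eq_smul (norm_pos_iff.1 hy) ?_
    rw [add_apply, smulRight_apply, hφy, one_smul, ← hTy]
    abel

/-- If `A - λI` is invertible on a complex Banach space with
`‖(A - λI)⁻¹‖ > 1/ε`, then there is a rank-one (rank at most one) perturbation
`K` with `‖K‖ < ε` such that `λ ∈ sp(A + K)`. -/
theorem exists_rank_one_perturbation_of_pseudospectrum
    {Y : Type*} [NormedAddCommGroup Y] [NormedSpace ℂ Y] [CompleteSpace Y]
    (A : Y →L[ℂ] Y) (ε : ℝ) (hε : 0 < ε) (lam : ℂ)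
    (hu : IsUnit (A - lam • (1 : Y →L[ℂ] Y)))
    (hn : 1 / ε < ‖Ring.inverse (A - lam • (1 : Y →L[ℂ] Y))‖) :
    ∃ K : Y →L[ℂ] Y,
      (∃ (φ : Y →L[ℂ] ℂ) (u : Y), ∀ x, K x = φ x • u) ∧
      ‖K‖ < ε ∧ lam ∈ spectrum ℂ (A + K) :=
  exists_rank_one_perturbation_of_pseudospectrum_general A ε hε lam hu hn
end

section
/- Let Y be a Banach space with a sequence of projections Pₙ satisfying ‖Pₙ‖ = ‖I − Pₙ‖ = 1 and Pₙ = PₙPₙ₊₁ = Pₙ₊₁Pₙ. Let K be a bounded operator with ‖(I − Pₙ)K‖ + ‖K(I − Pₙ)‖ → 0 (K is P-compact), and A any bounded operator commuting appropriately (A ∈ L(Y,P)). Then for every ε > 0 there exists m₀ such that for all m ≥ m₀, |‖A(I − Pₘ)‖ − inf_{L P-compact} ‖A + L‖| ≤ 2ε; in particular the quotient norm of A modulo the P-compact operators equals lim_{m→∞} ‖A(I − Pₘ)‖ and also lim_{m→∞} ‖(I − Pₘ)A‖. -/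
/-- `K` is `P`-compact: `‖(I - Pₙ)K‖ + ‖K(I - Pₙ)‖ → 0`. -/
def IsPCompact {Y : Type*} [NormedAddCommGroup Y] [NormedSpace ℝ Y]
    (P : ℕ → Y →L[ℝ] Y) (K : Y →L[ℝ] Y) : Prop :=
  Filter.Tendsto (fun n => ‖K - (P n).comp K‖ + ‖K - K.comp (P n)‖)
    Filter.atTop (nhds 0)

open Filter ContinuousLinearMap

/-- For a uniform approximate projection `(Pₙ)` and `A ∈ L(Y,P)`, the quotient
norm of `A` modulo the `P`-compact operators is approximated by `‖A(I - Pₘ)‖`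
up to `2ε` for all large `m`; in particular it equals
`lim ‖A(I - Pₘ)‖ = lim ‖(I - Pₘ)A‖`. -/
theorem quotient_norm_eq_lim
    {Y : Type*} [NormedAddCommGroup Y] [NormedSpace ℝ Y] [CompleteSpace Y]
    (P : ℕ → Y →L[ℝ] Y) (A : Y →L[ℝ] Y)
    (hproj : ∀ n, (P n).comp (P (n + 1)) = P n ∧ (P (n + 1)).comp (P n) = P n)
    (hidem : ∀ n, (P n).comp (P n) = P n)
    (hnorm : ∀ n, ‖P n‖ = 1 ∧ ‖ContinuousLinearMap.id ℝ Y - P n‖ = 1)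
    (hA : ∀ K : Y →L[ℝ] Y, IsPCompact P K →
      IsPCompact P (A.comp K) ∧ IsPCompact P (K.comp A)) :
    (∀ ε > (0 : ℝ), ∃ m₀ : ℕ, ∀ m ≥ m₀,
        |‖A - A.comp (P m)‖ -
          sInf {r : ℝ | ∃ L, IsPCompact P L ∧ r = ‖A + L‖}| ≤ 2 * ε) ∧
      Filter.Tendsto (fun m => ‖A - A.comp (P m)‖) Filter.atTop
        (nhds (sInf {r : ℝ | ∃ L, IsPCompact P L ∧ r = ‖A + L‖})) ∧
      Filter.Tendsto (fun m => ‖A - (P m).comp A‖) Filter.atTop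
        (nhds (sInf {r : ℝ | ∃ L, IsPCompact P L ∧ r = ‖A + L‖})) := by
  classical
  set S := {r : ℝ | ∃ L, IsPCompact P L ∧ r = ‖A + L‖} with hS
  have hzero : IsPCompact P 0 := by
    unfold IsPCompact
    simp only [ContinuousLinearMap.comp_zero, ContinuousLinearMap.zero_comp,
      sub_zero, sub_self, norm_zero, add_zero]
    exact tendsto_const_nhds
  have hSne : S.Nonempty := ⟨‖A + 0‖, 0, hzero, rfl⟩
  have hSbdd : BddBelow S := ⟨0, by rintro r ⟨L, _, rfl⟩; positivity⟩
  set q := sInf S with hq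
  -- P m is P-compact
  have hstable : ∀ m n, m ≤ n → (P n).comp (P m) = P m ∧ (P m).comp (P n) = P m := by
    intro m n hn
    induction n with
    | zero =>
      have hm : m = 0 := Nat.le_zero.mp hn
      subst hm; exact ⟨hidem 0, hidem 0⟩
    | succ k ih =>
      rcases Nat.lt_or_ge m (k+1) with h | h
      · have hk := ih (Nat.lt_succ_iff.mp h)
        constructor
        · calc (P (k+1)).comp (P m) = (P (k+1)).comp ((P k).comp (P m)) := by rw [hk.1]
            _ = ((P (k+1)).comp (P k)).comp (P m) := by rw [ContinuousLinearMap.comp_assoc]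
            _ = (P k).comp (P m) := by rw [(hproj k).2]
            _ = P m := hk.1
        · calc (P m).comp (P (k+1)) = ((P m).comp (P k)).comp (P (k+1)) := by rw [hk.2]
            _ = (P m).comp ((P k).comp (P (k+1))) := by rw [ContinuousLinearMap.comp_assoc]
            _ = (P m).comp (P k) := by rw [(hproj k).1]
            _ = P m := hk.2
      · have hm : m = k+1 := le_antisymm hn h
        subst hm; exact ⟨hidem _, hidem _⟩
  have hPcomp : ∀ m, IsPCompact P (P m) := by
    intro m
    unfold IsPCompact
    apply Tendsto.congr' _ tendsto_const_nhds
    filter_upwards [eventually_ge_atTop m] with n hn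
    simp [(hstable m n hn).1, (hstable m n hn).2]
  -- negation preserves P-compactness
  have hneg : ∀ K : Y →L[ℝ] Y, IsPCompact P K → IsPCompact P (-K) := by
    intro K hK
    unfold IsPCompact at hK ⊢
    have heq : (fun n => ‖(-K) - (P n).comp (-K)‖ + ‖(-K) - (-K).comp (P n)‖) =
        fun n => ‖K - (P n).comp K‖ + ‖K - K.comp (P n)‖ := by
      funext n
      have h1 : (-K) - (P n).comp (-K) = -(K - (P n).comp K) := by
        ext x; simp; abel
      have h2 : (-K) - (-K).comp (P n) = -(K - K.comp (P n)) := by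
        ext x; simp; abel
      rw [h1, h2, norm_neg, norm_neg]
    rw [heq]; exact hK
  -- lower bounds
  have hlow1 : ∀ m, q ≤ ‖A - A.comp (P m)‖ := by
    intro m
    apply csInf_le hSbdd
    exact ⟨-(A.comp (P m)), hneg _ (hA _ (hPcomp m)).1, by rw [sub_eq_add_neg]⟩
  have hlow2 : ∀ m, q ≤ ‖A - (P m).comp A‖ := by
    intro m
    apply csInf_le hSbdd
    exact ⟨-((P m).comp A), hneg _ (hA _ (hPcomp m)).2, by rw [sub_eq_add_neg]⟩
  -- key upper bound
  have key : ∀ ε > (0:ℝ), ∃ m₀ : ℕ, ∀ m ≥ m₀,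
      ‖A - A.comp (P m)‖ ≤ q + 2*ε ∧ ‖A - (P m).comp A‖ ≤ q + 2*ε := by
    intro ε hε
    obtain ⟨r, hrS, hr⟩ := exists_lt_of_csInf_lt hSne (show q < q + ε by linarith)
    obtain ⟨L, hL, rfl⟩ := hrS
    have htend := hL
    rw [IsPCompact, Metric.tendsto_atTop] at htend
    obtain ⟨m₀, hm₀⟩ := htend ε hε
    refine ⟨m₀, fun m hm => ?_⟩
    have hdist := hm₀ m hm
    rw [Real.dist_eq, sub_zero] at hdist
    have hsum : ‖L - (P m).comp L‖ + ‖L - L.comp (P m)‖ < ε := by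
      calc ‖L - (P m).comp L‖ + ‖L - L.comp (P m)‖
          ≤ |‖L - (P m).comp L‖ + ‖L - L.comp (P m)‖| := le_abs_self _
        _ < ε := hdist
    have hLr : ‖L - L.comp (P m)‖ ≤ ε := by
      have := norm_nonneg (L - (P m).comp L); linarith
    have hLl : ‖L - (P m).comp L‖ ≤ ε := by
      have := norm_nonneg (L - L.comp (P m)); linarith
    have hAL : ‖A + L‖ ≤ q + ε := le_of_lt hr
    constructor
    · have hdecomp : A - A.comp (P m) =
          (A + L).comp (ContinuousLinearMap.id ℝ Y - P m) - (L - L.comp (P m)) := by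
        ext x
        simp only [ContinuousLinearMap.sub_apply, ContinuousLinearMap.add_apply,
          ContinuousLinearMap.comp_apply, ContinuousLinearMap.id_apply, map_sub]
        abel
      calc ‖A - A.comp (P m)‖
          = ‖(A + L).comp (ContinuousLinearMap.id ℝ Y - P m) - (L - L.comp (P m))‖ := by
            rw [hdecomp]
        _ ≤ ‖(A + L).comp (ContinuousLinearMap.id ℝ Y - P m)‖ + ‖L - L.comp (P m)‖ :=
            norm_sub_le _ _
        _ ≤ ‖A + L‖ * ‖ContinuousLinearMap.id ℝ Y - P m‖ + ε := by
            gcongr; exact ContinuousLinearMap.opNorm_comp_le _ _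
        _ = ‖A + L‖ + ε := by rw [(hnorm m).2, mul_one]
        _ ≤ q + 2*ε := by linarith
    · have hdecomp : A - (P m).comp A =
          (ContinuousLinearMap.id ℝ Y - P m).comp (A + L) - (L - (P m).comp L) := by
        ext x
        simp only [ContinuousLinearMap.sub_apply, ContinuousLinearMap.add_apply,
          ContinuousLinearMap.comp_apply, ContinuousLinearMap.id_apply, map_add]
        abel
      calc ‖A - (P m).comp A‖
          = ‖(ContinuousLinearMap.id ℝ Y - P m).comp (A + L) - (L - (P m).comp L)‖ := by
            rw [hdecomp]
        _ ≤ ‖(ContinuousLinearMap.id ℝ Y - P m).comp (A + L)‖ + ‖L - (P m).comp L‖ :=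
            norm_sub_le _ _
        _ ≤ ‖ContinuousLinearMap.id ℝ Y - P m‖ * ‖A + L‖ + ε := by
            gcongr; exact ContinuousLinearMap.opNorm_comp_le _ _
        _ = ‖A + L‖ + ε := by rw [(hnorm m).2, one_mul]
        _ ≤ q + 2*ε := by linarith
  refine ⟨?_, ?_, ?_⟩
  · intro ε hε
    obtain ⟨m₀, h⟩ := key ε hε
    refine ⟨m₀, fun m hm => ?_⟩
    have h1 := hlow1 m
    have h2 := (h m hm).1
    rw [abs_le]
    constructor <;> linarith
  · rw [Metric.tendsto_atTop]
    intro ε hε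
    obtain ⟨m₀, h⟩ := key (ε/4) (by linarith)
    refine ⟨m₀, fun m hm => ?_⟩
    have h1 := hlow1 m
    have h2 := (h m hm).1
    rw [Real.dist_eq, abs_lt]
    constructor <;> linarith
  · rw [Metric.tendsto_atTop]
    intro ε hε
    obtain ⟨m₀, h⟩ := key (ε/4) (by linarith)
    refine ⟨m₀, fun m hm => ?_⟩
    have h1 := hlow2 m
    have h2 := (h m hm).2
    rw [Real.dist_eq, abs_lt]
    constructor <;> linarith
end

section
/- Let A be a bounded Fredholm operator of index zero on a Banach space Y. Then the supremum of ν(A+K) over all compact operators K equals the reciprocal of the quotient norm of A's regularizer: sup{ν(A+K) : K compact} = (inf{‖(A+K)⁻¹‖ : K compact, A+K invertible})⁻¹. Equivalently, ν_ess(A) = ‖(A + K(Y))⁻¹‖⁻¹ in the Calkin algebra, using the convention that ‖b⁻¹‖⁻¹ = 0 when b is not invertible. -/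
/-!
Perturb `A` by a finite-rank operator `F` so that `A + F` is invertible; this is where the index
enters. If `ν(A + K) > 0`, then `A + K` is injective, and so is the compact perturbation of the
identity in `A + K = (A + F) (1 + (A + F)⁻¹ (K - F))`, which is therefore invertible by the Fredholm
alternative. Since `ν(T) = ‖T⁻¹‖⁻¹` for invertible `T`, the positive values of `ν(A + K)` are
exactly the numbers `‖(A + K)⁻¹‖⁻¹`, and the supremum of the former is the reciprocal of the
infimum of the norms.
-/

/-- `A` is a Fredholm operator of index zero. -/
def IsFredholmIndexZero {Y : Type*} [NormedAddCommGroup Y] [NormedSpace ℝ Y]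
    (A : Y →L[ℝ] Y) : Prop :=
  FiniteDimensional ℝ (LinearMap.ker (A : Y →ₗ[ℝ] Y)) ∧
    IsClosed (LinearMap.range (A : Y →ₗ[ℝ] Y) : Set Y) ∧
    FiniteDimensional ℝ (Y ⧸ LinearMap.range (A : Y →ₗ[ℝ] Y)) ∧
    Module.finrank ℝ (LinearMap.ker (A : Y →ₗ[ℝ] Y)) =
      Module.finrank ℝ (Y ⧸ LinearMap.range (A : Y →ₗ[ℝ] Y))

open Function Module

/-- If `sInf N = 0`, then `S` is unbounded above and both sides are `0` by the junk conventions. -/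
lemma Real.sSup_eq_inv_sInf_of_inv_mem {S N : Set ℝ} (hN : N.Nonempty) (hN₀ : ∀ r ∈ N, 0 < r)
    (hNS : ∀ r ∈ N, r⁻¹ ∈ S) (hSN : ∀ s ∈ S, 0 < s → s⁻¹ ∈ N) : sSup S = (sInf N)⁻¹ := by
  obtain ⟨r₀, hr₀⟩ := hN
  have hd : 0 ≤ sInf N := le_csInf ⟨r₀, hr₀⟩ fun r hr => (hN₀ r hr).le
  rcases hd.eq_or_lt with hd | hd
  · rw [← hd, inv_zero]
    refine Real.sSup_of_not_bddAbove fun ⟨M, hM⟩ => ?_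
    have hM₁ : 0 < max M 1 := lt_max_of_lt_right one_pos
    obtain ⟨r, hr, hrM⟩ := exists_lt_of_csInf_lt ⟨r₀, hr₀⟩ (hd ▸ inv_pos.2 hM₁)
    have := (lt_inv_comm₀ (hN₀ r hr) hM₁).1 hrM
    linarith [hM (hNS r hr), le_max_left M 1]
  refine IsLUB.csSup_eq ⟨fun s hs => ?_, fun M hM => ?_⟩ ⟨_, hNS r₀ hr₀⟩
  · rcases le_or_gt s 0 with hs₀ | hs₀
    · exact hs₀.trans (inv_nonneg.2 hd.le)
    exact (le_inv_comm₀ hs₀ hd).2 (csInf_le ⟨0, fun r hr => (hN₀ r hr).le⟩ (hSN s hs hs₀))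
  · have hM₀ : 0 < M := (inv_pos.2 (hN₀ r₀ hr₀)).trans_le (hM (hNS r₀ hr₀))
    refine (inv_le_comm₀ hd hM₀).2 (le_csInf ⟨r₀, hr₀⟩ fun r hr => ?_)
    exact (inv_le_comm₀ (hN₀ r hr) hM₀).1 (hM (hNS r hr))

namespace ContinuousLinearMap

section LowerNorm

variable {𝕜 E F : Type*} [RCLike 𝕜] [NormedAddCommGroup E] [NormedSpace 𝕜 E]
  [NormedAddCommGroup F] [NormedSpace 𝕜 F]

/-- The lower norm `ν(T)`; it is `sInf ∅ = 0` on the zero space. -/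
noncomputable def lowerNorm (T : E →L[𝕜] F) : ℝ :=
  sInf {s : ℝ | ∃ x : E, ‖x‖ = 1 ∧ s = ‖T x‖}

lemma lowerNorm_nonneg (T : E →L[𝕜] F) : 0 ≤ T.lowerNorm :=
  Real.sInf_nonneg (by rintro s ⟨x, -, rfl⟩; positivity)

lemma lowerNorm_le_norm_apply (T : E →L[𝕜] F) {x : E} (hx : ‖x‖ = 1) : T.lowerNorm ≤ ‖T x‖ :=
  csInf_le ⟨0, by rintro s ⟨y, -, rfl⟩; positivity⟩ ⟨x, hx, rfl⟩

lemma lowerNorm_mul_norm_le (T : E →L[𝕜] F) (x : E) : T.lowerNorm * ‖x‖ ≤ ‖T x‖ := by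
  rcases eq_or_ne x 0 with rfl | hx
  · simp
  have := T.lowerNorm_le_norm_apply (norm_smul_inv_norm (𝕜 := 𝕜) hx)
  rwa [map_smul, norm_smul, norm_inv, RCLike.norm_ofReal, abs_norm, inv_mul_eq_div,
    le_div_iff₀ (norm_pos_iff.2 hx)] at this

lemma injective_of_lowerNorm_pos {T : E →L[𝕜] F} (h : 0 < T.lowerNorm) : Injective T := by
  refine (injective_iff_map_eq_zero T).2 fun x hx => norm_eq_zero.1 ?_
  have := T.lowerNorm_mul_norm_le x
  rw [hx, norm_zero] at this
  exact le_antisymm (nonpos_of_mul_nonpos_right this h) (norm_nonneg x)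

lemma lowerNorm_eq_inv_norm_of_comp_eq_id {T : E →L[𝕜] F} {B : F →L[𝕜] E}
    (hTB : T.comp B = ContinuousLinearMap.id 𝕜 F) (hBT : B.comp T = ContinuousLinearMap.id 𝕜 E) :
    T.lowerNorm = ‖B‖⁻¹ := by
  have hBT' (x : E) : B (T x) = x := congr($hBT x)
  have hTB' (y : F) : T (B y) = y := congr($hTB y)
  rcases subsingleton_or_nontrivial E with hE | hE
  · have : {s : ℝ | ∃ x : E, ‖x‖ = 1 ∧ s = ‖T x‖} = ∅ := by
      ext s; simp [Subsingleton.elim _ (0 : E)]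
    rw [lowerNorm, this, Real.sInf_empty, Subsingleton.elim B 0, norm_zero, inv_zero]
  have hB : 0 < ‖B‖ := by
    obtain ⟨x, hx⟩ := exists_ne (0 : E)
    exact norm_pos_iff.2 fun h => hx (by rw [← hBT' x, h, zero_apply])
  refine le_antisymm ?_ ?_
  · rcases (lowerNorm_nonneg T).eq_or_lt with h | h
    · rw [← h]; positivity
    refine (le_inv_comm₀ h hB).2 (B.opNorm_le_bound (by positivity) fun y => ?_)
    rw [le_inv_mul_iff₀ h]
    simpa only [hTB'] using T.lowerNorm_mul_norm_le (B y)
  · refine le_csInf ?_ ?_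
    · obtain ⟨x, hx⟩ := exists_ne (0 : E)
      exact ⟨_, _, norm_smul_inv_norm (𝕜 := 𝕜) hx, rfl⟩
    rintro s ⟨x, hx, rfl⟩
    rw [inv_le_iff_one_le_mul₀' hB]
    calc 1 = ‖B (T x)‖ := by rw [hBT', hx]
      _ ≤ ‖B‖ * ‖T x‖ := B.le_opNorm (T x)

end LowerNorm

end ContinuousLinearMap

section FredholmAlternative

variable {𝕜 E : Type*} [NontriviallyNormedField 𝕜] [NormedAddCommGroup E] [NormedSpace 𝕜 E]
  [CompleteSpace E]

lemma IsCompactOperator.isUnit_one_add_of_injective {C : E →L[𝕜] E} (hC : IsCompactOperator C)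
    (hinj : Injective ⇑(1 + C)) : IsUnit (1 + C) := by
  have hμ : ¬ End.HasEigenvalue (C : End 𝕜 E) (-1) := by
    rw [End.hasEigenvalue_iff, ne_eq, not_not, Submodule.eq_bot_iff]
    intro x hx
    have hCx : C x = -x := by simpa using End.mem_eigenspace_iff.1 hx
    exact hinj (by simp [hCx] : (1 + C) x = (1 + C) 0)
  have := (hC.hasEigenvalue_or_mem_resolventSet (neg_ne_zero.2 one_ne_zero)).resolve_left hμ
  rwa [spectrum.mem_resolventSet_iff, map_neg, map_one, ← neg_add', IsUnit.neg_iff] at this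

lemma isUnit_of_injective_of_isCompactOperator_sub {T S : E →L[𝕜] E} (hS : IsUnit S)
    (hTS : IsCompactOperator (T - S)) (hT : Injective T) : IsUnit T := by
  obtain ⟨u, rfl⟩ := hS
  have hfac : T = u * (1 + ↑u⁻¹ * (T - u)) := by
    rw [mul_add, mul_one, ← mul_assoc, Units.mul_inv, one_mul, add_sub_cancel]
  have hinj : Injective ⇑(1 + ↑u⁻¹ * (T - u)) := fun x y h => hT <| by
    rw [hfac]; exact congrArg (u : E →L[𝕜] E) h
  rw [hfac]
  exact u.isUnit.mul ((hTS.clm_comp _).isUnit_one_add_of_injective hinj)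

end FredholmAlternative

section IndexZero

variable {R M N : Type*} [Ring R] [AddCommGroup M] [Module R M] [AddCommGroup N] [Module R N]

open LinearMap in
lemma LinearMap.bijective_add_of_isCompl_range {A : M →ₗ[R] N} {W : Submodule R N}
    (hW : IsCompl (range A) W) (π : M →ₗ[R] ker A) (hπ : ∀ k : ker A, π k = k)
    (e : ker A ≃ₗ[R] W) : Bijective (A + W.subtype ∘ₗ e.toLinearMap ∘ₗ π) := by
  have hπ_ker (x : M) : A (π x) = 0 := (π x).2
  constructor
  · refine (injective_iff_map_eq_zero _).2 fun x hx => ?_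
    simp only [add_apply, comp_apply, LinearEquiv.coe_coe, Submodule.coe_subtype] at hx
    have hAx : A x = 0 := by
      refine Submodule.disjoint_def.1 hW.disjoint _ (mem_range_self A x) ?_
      rw [eq_neg_of_add_eq_zero_left hx]
      exact neg_mem (e (π x)).2
    have hπx : π x = 0 := by simpa [hAx] using hx
    simpa [hπx, eq_comm] using congrArg Subtype.val (hπ ⟨x, hAx⟩)
  · intro y
    obtain ⟨_, ⟨m, rfl⟩, w, hw, rfl⟩ :=
      Submodule.mem_sup.1 (hW.sup_eq_top ▸ Submodule.mem_top : y ∈ range A ⊔ W)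
    refine ⟨m - π m + e.symm ⟨w, hw⟩, ?_⟩
    have hπ' : π (m - π m + e.symm ⟨w, hw⟩) = e.symm ⟨w, hw⟩ := by simp [hπ]
    simp [hπ', hπ_ker]

variable {𝕜 E F : Type*} [RCLike 𝕜] [NormedAddCommGroup E] [NormedSpace 𝕜 E]
  [NormedAddCommGroup F] [NormedSpace 𝕜 F]

lemma ContinuousLinearMap.exists_isCompactOperator_bijective_add (A : E →L[𝕜] F)
    [FiniteDimensional 𝕜 (LinearMap.ker (A : E →ₗ[𝕜] F))]
    [FiniteDimensional 𝕜 (F ⧸ LinearMap.range (A : E →ₗ[𝕜] F))]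
    (hA : finrank 𝕜 (LinearMap.ker (A : E →ₗ[𝕜] F)) =
      finrank 𝕜 (F ⧸ LinearMap.range (A : E →ₗ[𝕜] F))) :
    ∃ K : E →L[𝕜] F, IsCompactOperator K ∧ Bijective (A + K) := by
  obtain ⟨π, hπ⟩ := Submodule.ClosedComplemented.of_finiteDimensional (LinearMap.ker (A : E →ₗ[𝕜] F))
  obtain ⟨W, hW⟩ := Submodule.exists_isCompl (LinearMap.range (A : E →ₗ[𝕜] F))
  let q := Submodule.quotientEquivOfIsCompl _ W hW
  have : FiniteDimensional 𝕜 W := q.finiteDimensional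
  obtain ⟨e⟩ := FiniteDimensional.nonempty_linearEquiv_of_finrank_eq (hA.trans q.finrank_eq)
  let e' : LinearMap.ker (A : E →ₗ[𝕜] F) →L[𝕜] F :=
    W.subtypeL ∘L LinearMap.toContinuousLinearMap e.toLinearMap
  exact ⟨e' ∘L π, (isCompactOperator_of_locallyCompactSpace_dom π).clm_comp e',
    LinearMap.bijective_add_of_isCompl_range hW π hπ e⟩

end IndexZero

/-- For a Fredholm operator `A` of index zero on a Banach space, the essential
lower norm `sup {ν(A+K) : K compact}` equals the reciprocal of
`inf {‖(A+K)⁻¹‖ : K compact, A+K invertible}`, i.e. the reciprocal of the norm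
of the inverse of `A` in the Calkin algebra. -/
theorem essential_lower_norm_eq_inv_quotient_norm
    {Y : Type*} [NormedAddCommGroup Y] [NormedSpace ℝ Y] [CompleteSpace Y]
    (A : Y →L[ℝ] Y) (hA : IsFredholmIndexZero A) :
    sSup {r : ℝ | ∃ K : Y →L[ℝ] Y, IsCompactOperator K ∧
        r = sInf {s : ℝ | ∃ x : Y, ‖x‖ = 1 ∧ s = ‖(A + K) x‖}} =
      (sInf {r : ℝ | ∃ K : Y →L[ℝ] Y, IsCompactOperator K ∧
        ∃ B : Y →L[ℝ] Y, (A + K).comp B = ContinuousLinearMap.id ℝ Y ∧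
          B.comp (A + K) = ContinuousLinearMap.id ℝ Y ∧ r = ‖B‖})⁻¹ := by
  obtain ⟨_, -, _, hindex⟩ := hA
  obtain ⟨F, hF, hAF⟩ := A.exists_isCompactOperator_bijective_add hindex
  have hAF_unit : IsUnit (A + F) := ContinuousLinearMap.isUnit_iff_bijective.2 hAF
  rcases subsingleton_or_nontrivial Y with hY | hY
  · simp [Subsingleton.elim _ (0 : Y), Subsingleton.elim _ (0 : Y →L[ℝ] Y), isCompactOperator_zero]
  refine Real.sSup_eq_inv_sInf_of_inv_mem ?_ ?_ ?_ ?_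
  · obtain ⟨B, hAFB, hBAF⟩ := isUnit_iff_exists.1 hAF_unit
    exact ⟨‖B‖, F, hF, B, hAFB, hBAF, rfl⟩
  · rintro r ⟨K, -, B, hB, -, rfl⟩
    refine norm_pos_iff.2 fun h => zero_ne_one (α := Y →L[ℝ] Y) ?_
    rwa [h, ContinuousLinearMap.comp_zero] at hB
  · rintro r ⟨K, hK, B, hKB, hBK, rfl⟩
    exact ⟨K, hK, (ContinuousLinearMap.lowerNorm_eq_inv_norm_of_comp_eq_id hKB hBK).symm⟩
  · rintro s ⟨K, hK, rfl⟩ hs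
    have hAK_sub : IsCompactOperator ⇑(A + K - (A + F)) := by
      rw [add_sub_add_left_eq_sub, FunLike.coe_sub]
      exact hK.sub hF
    have hAK_inj := ContinuousLinearMap.injective_of_lowerNorm_pos (T := A + K) hs
    obtain ⟨B, hKB, hBK⟩ :=
      isUnit_iff_exists.1 (isUnit_of_injective_of_isCompactOperator_sub hAF_unit hAK_sub hAK_inj)
    refine ⟨K, hK, B, hKB, hBK, ?_⟩
    rw [← inv_inv ‖B‖]
    exact congrArg _ (ContinuousLinearMap.lowerNorm_eq_inv_norm_of_comp_eq_id hKB hBK)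
end

section
/- (Operator norm localization for band operators on l^∞) Let X be a Banach space, 𝐗 = l^∞(ℤᴺ, X), and let A be a band operator on 𝐗 with band-width w (i.e. the matrix entries a_{ij} vanish whenever |i−j|_∞ > w). Then for D = 2w+1 and every F ⊆ ℤᴺ, the operator B := A·χ_F I satisfies ‖B‖ = sup{‖Bx‖/‖x‖ : x ≠ 0, diam(supp x) ≤ D}, i.e. the norm of B is attained (in supremum) on sequences supported in cubes of side length at most 2w+1. -/
open scoped Classical

instance : Fact ((1 : ENNReal) ≤ ⊤) := ⟨le_top⟩

/-- Operator norm localization for band operators on `l^∞(ℤᴺ, X)`: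
if `A` has band-width `w` (i.e. `(Ax)ᵢ` only depends on the entries `xⱼ` with
`|i - j|_∞ ≤ w`) and `M_F` is the multiplication by the characteristic
function of a set `F ⊆ ℤᴺ`, then with `D = 2w + 1` the norm of `B = A ∘ M_F`
equals the supremum of `‖Bx‖/‖x‖` over `x ≠ 0` whose support has diameter at
most `D`. -/
theorem band_operator_norm_localization_linfty
    {N : ℕ} {X : Type*} [NormedAddCommGroup X] [NormedSpace ℝ X]
    (A : lp (fun _ : Fin N → ℤ => X) ⊤ →L[ℝ] lp (fun _ : Fin N → ℤ => X) ⊤)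
    (w : ℕ)
    (hband : ∀ (i : Fin N → ℤ) (x y : lp (fun _ : Fin N → ℤ => X) ⊤),
      (∀ j : Fin N → ℤ, (∀ d, |i d - j d| ≤ (w : ℤ)) → x j = y j) →
      A x i = A y i)
    (F : Set (Fin N → ℤ))
    (MF : lp (fun _ : Fin N → ℤ => X) ⊤ →L[ℝ] lp (fun _ : Fin N → ℤ => X) ⊤)
    (hMF : ∀ (x : lp (fun _ : Fin N → ℤ => X) ⊤) (j : Fin N → ℤ),
      MF x j = if j ∈ F then x j else 0) :
    ‖A.comp MF‖ =
      sSup {r : ℝ | ∃ x : lp (fun _ : Fin N → ℤ => X) ⊤, x ≠ 0 ∧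
        (∀ i j : Fin N → ℤ, x i ≠ 0 → x j ≠ 0 →
          ∀ d, |i d - j d| ≤ ((2 * w + 1 : ℕ) : ℤ)) ∧
        r = ‖(A.comp MF) x‖ / ‖x‖} := by
  set B := A.comp MF with hBdef
  set S : Set ℝ := {r : ℝ | ∃ x : lp (fun _ : Fin N → ℤ => X) ⊤, x ≠ 0 ∧
        (∀ i j : Fin N → ℤ, x i ≠ 0 → x j ≠ 0 →
          ∀ d, |i d - j d| ≤ ((2 * w + 1 : ℕ) : ℤ)) ∧
        r = ‖B x‖ / ‖x‖} with hSdef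
  have hub : ∀ r ∈ S, r ≤ ‖B‖ := by
    rintro r ⟨x, hx0, -, rfl⟩
    rw [div_le_iff₀ (norm_pos_iff.mpr hx0)]
    exact B.le_opNorm x
  have hbdd : BddAbove S := ⟨‖B‖, hub⟩
  by_cases hX : ∀ v : X, v = 0
  · -- X is trivial: everything is zero
    have hzero : ∀ x : lp (fun _ : Fin N → ℤ => X) ⊤, x = 0 := by
      intro x
      apply lp.ext
      funext j
      simp [hX (x j)]
    have hSempty : S = ∅ := by
      ext r
      simp only [hSdef, Set.mem_setOf_eq, Set.mem_empty_iff_false, iff_false]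
      rintro ⟨x, hx0, -, -⟩
      exact hx0 (hzero x)
    have hB0 : B = 0 := by
      ext x
      rw [hzero x]
      simp
    rw [hSempty, Real.sSup_empty, hB0, norm_zero]
  · push_neg at hX
    obtain ⟨v, hv⟩ := hX
    -- a delta element to show S is nonempty
    set x0 : lp (fun _ : Fin N → ℤ => X) ⊤ := lp.single ⊤ (fun _ => 0) v with hx0def
    have hx0ne : x0 ≠ 0 := by
      intro h
      have : x0 (fun _ => 0) = 0 := by rw [h]; exact rfl
      rw [hx0def, lp.single_apply_self] at this
      exact hv this
    have hr0mem : ‖B x0‖ / ‖x0‖ ∈ S := by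
      refine ⟨x0, hx0ne, ?_, rfl⟩
      intro i j hi hj d
      have hi0 : i = fun _ => 0 := by
        by_contra h
        refine hi ?_
        rw [hx0def]
        exact lp.single_apply_ne (E := fun _ : Fin N → ℤ => X) ⊤ (fun _ => 0) v h
      have hj0 : j = fun _ => 0 := by
        by_contra h
        refine hj ?_
        rw [hx0def]
        exact lp.single_apply_ne (E := fun _ : Fin N → ℤ => X) ⊤ (fun _ => 0) v h
      subst hi0; subst hj0
      simp
      positivity
    have hSne : S.Nonempty := ⟨_, hr0mem⟩
    have h0 : 0 ≤ sSup S :=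
      le_trans (div_nonneg (norm_nonneg _) (norm_nonneg _)) (le_csSup hbdd hr0mem)
    refine le_antisymm ?_ (csSup_le hSne hub)
    refine B.opNorm_le_bound h0 (fun x => ?_)
    refine lp.norm_le_of_forall_le (mul_nonneg h0 (norm_nonneg x)) (fun i => ?_)
    -- truncate x to the cube centred at i of radius w
    have hmem : Memℓp (fun j : Fin N → ℤ =>
        if (∀ d, |i d - j d| ≤ (w : ℤ)) then x j else 0) ⊤ := by
      apply memℓp_infty
      refine ⟨‖x‖, ?_⟩
      rintro r ⟨j, rfl⟩
      dsimp only
      split_ifs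
      · exact lp.norm_apply_le_norm ENNReal.top_ne_zero x j
      · simp [norm_nonneg]
    set x' : lp (fun _ : Fin N → ℤ => X) ⊤ := ⟨_, hmem⟩ with hx'def
    have hx'apply : ∀ j : Fin N → ℤ,
        x' j = if (∀ d, |i d - j d| ≤ (w : ℤ)) then x j else 0 := fun j => rfl
    have hx'nm : ‖x'‖ ≤ ‖x‖ := by
      refine lp.norm_le_of_forall_le (norm_nonneg x) (fun j => ?_)
      rw [hx'apply]
      split_ifs
      · exact lp.norm_apply_le_norm ENNReal.top_ne_zero x j
      · simp [norm_nonneg]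
    have hkey : B x i = B x' i := by
      show A (MF x) i = A (MF x') i
      apply hband
      intro j hj
      rw [hMF, hMF, hx'apply, if_pos hj]
    by_cases hx'0 : x' = 0
    · rw [hkey, hx'0]
      simp only [map_zero]
      have : ((0 : lp (fun _ : Fin N → ℤ => X) ⊤) : ∀ j, X) i = 0 := rfl
      rw [this, norm_zero]
      exact mul_nonneg h0 (norm_nonneg x)
    · have hsupp : ∀ i' j' : Fin N → ℤ, x' i' ≠ 0 → x' j' ≠ 0 →
          ∀ d, |i' d - j' d| ≤ ((2 * w + 1 : ℕ) : ℤ) := by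
        intro i' j' hi' hj' d
        have h1 : ∀ d, |i d - i' d| ≤ (w : ℤ) := by
          by_contra h
          exact hi' (by rw [hx'apply, if_neg h])
        have h2 : ∀ d, |i d - j' d| ≤ (w : ℤ) := by
          by_contra h
          exact hj' (by rw [hx'apply, if_neg h])
        have h3 : |i' d - j' d| ≤ |i' d - i d| + |i d - j' d| := abs_sub_le _ _ _
        have h4 : |i' d - i d| = |i d - i' d| := abs_sub_comm _ _
        have := h1 d
        have := h2 d
        push_cast
        omega
      have hr'mem : ‖B x'‖ / ‖x'‖ ∈ S := ⟨x', hx'0, hsupp, rfl⟩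
      have hr'le : ‖B x'‖ / ‖x'‖ ≤ sSup S := le_csSup hbdd hr'mem
      have hBx' : ‖B x'‖ ≤ sSup S * ‖x'‖ := by
        rw [div_le_iff₀ (norm_pos_iff.mpr hx'0)] at hr'le
        exact hr'le
      calc ‖B x i‖ = ‖B x' i‖ := by rw [hkey]
        _ ≤ ‖B x'‖ := lp.norm_apply_le_norm ENNReal.top_ne_zero _ i
        _ ≤ sSup S * ‖x'‖ := hBx'
        _ ≤ sSup S * ‖x‖ := mul_le_mul_of_nonneg_left hx'nm h0
end

section
/- (Operator norm localization for band operators on l^p, 1 ≤ p < ∞) Let 𝐗 = l^p(ℤᴺ, X) with 1 ≤ p < ∞ and let δ > 0. Then there exists D ∈ ℕ, depending only on δ, p, N and the band-width w, such that for every band operator B on 𝐗 of band-width at most w: (1−δ)‖B‖ ≤ sup{‖Bx‖/‖x‖ : x ≠ 0, diam(supp x) ≤ D} ≤ ‖B‖. -/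
/-!
Tile `ℤᴺ` by the translates `k + Cₙ` of the cube `Cₙ = {-n, …, n}ᴺ`, `k ∈ ℤᴺ`; every point lies
in exactly `|Cₙ|` of them. On `k + Cₙ` the band operator `B` only sees `x` on `k + Cₙ₊w`, and the
restriction of `x` to `k + Cₙ₊w` has support of diameter at most `D = 2(n + w)`. Summing over `k`
gives `|Cₙ| ‖Bx‖ᵖ ≤ |Cₙ₊w| (c ‖x‖)ᵖ`, where `c` is the supremum of `‖By‖ / ‖y‖` over such `y`,
and `|Cₙ| / |Cₙ₊w| = ((2n + 1) / (2n + 2w + 1))ᴺ ≥ 1 - 2wN / (2n + 1)` by Bernoulli's inequality.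
-/
open scoped ENNReal
open Finset

theorem ENNReal.tsum_tsum_indicator_sub_mem {ι : Type*} [AddCommGroup ι] (C : Finset ι)
    (g : ι → ℝ≥0∞) : ∑' k, ∑' i, {i | i - k ∈ C}.indicator g i = #C * ∑' i, g i := by
  rw [ENNReal.tsum_comm, ← ENNReal.tsum_mul_left]
  refine tsum_congr fun i => ?_
  rw [← (Equiv.subLeft i).tsum_eq, tsum_eq_sum (s := C) (fun k hk => by simp [hk]),
    Finset.sum_congr rfl fun k hk => Set.indicator_of_mem (by simpa using hk) g]
  simp

namespace lp

variable {ι E F : Type*} [NormedAddCommGroup E] [NormedAddCommGroup F] {p : ℝ≥0∞}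

noncomputable def indicator (s : Set ι) (f : lp (fun _ : ι => E) p) : lp (fun _ : ι => E) p :=
  ⟨s.indicator f, (lp.memℓp f).mono' fun _ => norm_indicator_le_norm_self _ _⟩

@[simp]
theorem indicator_apply (s : Set ι) (f : lp (fun _ : ι => E) p) (i : ι) :
    indicator s f i = s.indicator f i := rfl

theorem tsum_enorm_rpow_eq (hp : 0 < p.toReal) (f : lp (fun _ : ι => E) p) :
    ∑' i, ‖f i‖ₑ ^ p.toReal = ENNReal.ofReal (‖f‖ ^ p.toReal) := by
  rw [norm_rpow_eq_tsum hp, ENNReal.ofReal_tsum_of_nonneg (fun _ => by positivity)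
    ((lp.memℓp f).summable hp)]
  simp_rw [← ENNReal.ofReal_rpow_of_nonneg (norm_nonneg _) hp.le, ofReal_norm]

theorem tsum_norm_rpow_indicator_translates [AddCommGroup ι] (hp : 0 < p.toReal) (C : Finset ι)
    (f : lp (fun _ : ι => E) p) :
    ∑' k, ENNReal.ofReal (‖indicator {j | j - k ∈ C} f‖ ^ p.toReal) =
      #C * ENNReal.ofReal (‖f‖ ^ p.toReal) := by
  rw [← tsum_enorm_rpow_eq hp, ← ENNReal.tsum_tsum_indicator_sub_mem]
  refine tsum_congr fun k => ?_
  rw [← tsum_enorm_rpow_eq hp]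
  refine tsum_congr fun i => ?_
  by_cases hi : i - k ∈ C <;> simp [hi, hp]

theorem card_mul_norm_rpow_le_of_translates [AddCommGroup ι] (hp : 0 < p.toReal)
    {C C' : Finset ι} {B : lp (fun _ : ι => E) p → lp (fun _ : ι => F) p}
    {x : lp (fun _ : ι => E) p} {c : ℝ} (hc : 0 ≤ c)
    (hloc : ∀ k i, i - k ∈ C → B x i = B (indicator {j | j - k ∈ C'} x) i)
    (hbound : ∀ k, ‖B (indicator {j | j - k ∈ C'} x)‖ ≤ c * ‖indicator {j | j - k ∈ C'} x‖) :
    #C * ‖B x‖ ^ p.toReal ≤ #C' * (c * ‖x‖) ^ p.toReal := by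
  set q := p.toReal
  set xk := fun k => indicator {j | j - k ∈ C'} x
  have key : (#C : ℝ≥0∞) * ENNReal.ofReal (‖B x‖ ^ q) ≤
      #C' * ENNReal.ofReal ((c * ‖x‖) ^ q) := calc
    (#C : ℝ≥0∞) * ENNReal.ofReal (‖B x‖ ^ q)
        = ∑' k, ∑' i, {i | i - k ∈ C}.indicator (fun i => ‖B x i‖ₑ ^ q) i := by
      rw [ENNReal.tsum_tsum_indicator_sub_mem, tsum_enorm_rpow_eq hp]
    _ ≤ ∑' k, ∑' i, ‖B (xk k) i‖ₑ ^ q := by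
      refine ENNReal.tsum_le_tsum fun k => ENNReal.tsum_le_tsum fun i => ?_
      by_cases hi : i - k ∈ C
      · rw [Set.indicator_of_mem (show i ∈ {i | i - k ∈ C} from hi), hloc k i hi]
      · simp [hi]
    _ = ∑' k, ENNReal.ofReal (‖B (xk k)‖ ^ q) := tsum_congr fun k => tsum_enorm_rpow_eq hp _
    _ ≤ ∑' k, ENNReal.ofReal (c ^ q) * ENNReal.ofReal (‖xk k‖ ^ q) := by
      refine ENNReal.tsum_le_tsum fun k => ?_
      rw [← ENNReal.ofReal_mul (Real.rpow_nonneg hc q), ← Real.mul_rpow hc (norm_nonneg' _)]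
      exact ENNReal.ofReal_le_ofReal (Real.rpow_le_rpow (norm_nonneg' _) (hbound k) hp.le)
    _ = #C' * ENNReal.ofReal ((c * ‖x‖) ^ q) := by
      rw [ENNReal.tsum_mul_left, tsum_norm_rpow_indicator_translates hp, Real.mul_rpow hc
        (norm_nonneg' _), ENNReal.ofReal_mul (Real.rpow_nonneg hc q)]
      ring
  rw [← ENNReal.ofReal_natCast, ← ENNReal.ofReal_mul (Nat.cast_nonneg _),
    ← ENNReal.ofReal_natCast, ← ENNReal.ofReal_mul (Nat.cast_nonneg _)] at key
  exact (ENNReal.ofReal_le_ofReal_iff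
    (mul_nonneg (Nat.cast_nonneg _) (Real.rpow_nonneg (mul_nonneg hc (norm_nonneg' _)) q))).1 key

end lp

theorem one_sub_mul_pow_le_pow {a m δ : ℝ} (N : ℕ) (ha : 0 < a) (hm : 0 ≤ m)
    (hδ : N * m ≤ δ * a) : (1 - δ) * (a + m) ^ N ≤ a ^ N := by
  have hb : 0 < a + m := by linarith
  have hmb : m / (a + m) ≤ 1 := (div_le_one hb).2 (by linarith)
  have bernoulli := one_add_mul_le_pow (a := -(m / (a + m))) (by linarith) N
  have hratio : 1 + -(m / (a + m)) = a / (a + m) := by field_simp; ring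
  have hNm : N * (m / (a + m)) ≤ δ := by
    have hδ0 : 0 ≤ δ := nonneg_of_mul_nonneg_left ((by positivity : (0:ℝ) ≤ N * m).trans hδ) ha
    rw [mul_div_assoc', div_le_iff₀ hb]
    nlinarith [mul_nonneg hδ0 hm]
  rw [hratio, div_pow, le_div_iff₀ (pow_pos hb N)] at bernoulli
  nlinarith [pow_pos hb N]

theorem mul_le_of_mul_rpow_le {a b s q : ℝ} (ha : 0 ≤ a) (hb : 0 ≤ b) (hs0 : 0 ≤ s)
    (hs1 : s ≤ 1) (hq : 1 ≤ q) (h : s * a ^ q ≤ b ^ q) : s * a ≤ b := by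
  have hq0 : 0 < q := by linarith
  rw [← Real.rpow_le_rpow_iff (mul_nonneg hs0 ha) hb hq0, Real.mul_rpow hs0 ha]
  calc s ^ q * a ^ q ≤ s * a ^ q :=
        mul_le_mul_of_nonneg_right (Real.rpow_le_self_of_le_one hs0 hs1 hq) (by positivity)
    _ ≤ b ^ q := h

namespace ContinuousLinearMap

variable {𝕜 E F : Type*} [NontriviallyNormedField 𝕜] [NormedAddCommGroup E] [NormedSpace 𝕜 E]
  [SeminormedAddCommGroup F] [NormedSpace 𝕜 F]

noncomputable def opNormOn (B : E →L[𝕜] F) (P : E → Prop) : ℝ :=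
  sSup {r | ∃ x, x ≠ 0 ∧ P x ∧ r = ‖B x‖ / ‖x‖}

theorem opNormOn_nonneg (B : E →L[𝕜] F) (P : E → Prop) : 0 ≤ B.opNormOn P :=
  Real.sSup_nonneg fun _ ⟨_, _, _, hr⟩ => hr ▸ by positivity

theorem opNormOn_le_opNorm (B : E →L[𝕜] F) (P : E → Prop) : B.opNormOn P ≤ ‖B‖ :=
  Real.sSup_le (fun _ ⟨x, _, _, hr⟩ => hr ▸ B.ratio_le_opNorm x) (norm_nonneg B)

theorem norm_apply_le_opNormOn_mul (B : E →L[𝕜] F) {P : E → Prop} {x : E} (hx : P x) :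
    ‖B x‖ ≤ B.opNormOn P * ‖x‖ := by
  rcases eq_or_ne x 0 with rfl | hx0
  · simp
  have hbdd : BddAbove {r | ∃ x, x ≠ 0 ∧ P x ∧ r = ‖B x‖ / ‖x‖} :=
    ⟨‖B‖, fun _ ⟨y, _, _, hr⟩ => hr ▸ B.ratio_le_opNorm y⟩
  rw [← div_le_iff₀ (norm_pos_iff.2 hx0)]
  exact le_csSup hbdd ⟨x, hx0, hx, rfl⟩

theorem mul_opNorm_le_of_forall {B : E →L[𝕜] F} {s c : ℝ} (hs : 0 ≤ s) (hc : 0 ≤ c)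
    (h : ∀ x, s * ‖B x‖ ≤ c * ‖x‖) : s * ‖B‖ ≤ c := by
  rcases hs.eq_or_lt with rfl | hs
  · simpa using hc
  rw [← le_div_iff₀' hs]
  exact B.opNorm_le_bound (div_nonneg hc hs.le) fun x => by
    rw [div_mul_eq_mul_div, le_div_iff₀' hs]
    exact h x

end ContinuousLinearMap

noncomputable def cube (N n : ℕ) : Finset (Fin N → ℤ) :=
  Fintype.piFinset fun _ => Finset.Icc (-(n : ℤ)) n

theorem mem_cube {N n : ℕ} {j : Fin N → ℤ} : j ∈ cube N n ↔ ∀ d, |j d| ≤ n := by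
  simp [cube, abs_le]

theorem card_cube (N n : ℕ) : #(cube N n) = (2 * n + 1) ^ N := by
  simp only [cube, Fintype.card_piFinset, Int.card_Icc, prod_const, card_univ, Fintype.card_fin]
  congr 1
  omega

theorem one_sub_mul_card_cube_le {N w n : ℕ} {δ : ℝ} (hn : (2 * w * N : ℝ) ≤ δ * (2 * n + 1)) :
    (1 - δ) * #(cube N (n + w)) ≤ #(cube N n) := by
  have := one_sub_mul_pow_le_pow N (a := 2 * n + 1) (m := 2 * w) (δ := δ) (by positivity)
    (by positivity) (by linarith)
  rw [card_cube, card_cube]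
  push_cast
  convert this using 3
  ring

section Band

variable {N : ℕ} {X Y : Type*} [NormedAddCommGroup X] [NormedAddCommGroup Y] {p : ℝ≥0∞}

def IsBandOperator (w : ℕ)
    (B : lp (fun _ : Fin N → ℤ => X) p → lp (fun _ : Fin N → ℤ => Y) p) : Prop :=
  ∀ (i : Fin N → ℤ) (x y : lp (fun _ : Fin N → ℤ => X) p),
    (∀ j : Fin N → ℤ, (∀ d, |i d - j d| ≤ (w : ℤ)) → x j = y j) → B x i = B y i

def SuppDiamLE (D : ℕ) (x : (Fin N → ℤ) → X) : Prop :=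
  ∀ i j : Fin N → ℤ, x i ≠ 0 → x j ≠ 0 → ∀ d, |i d - j d| ≤ (D : ℤ)

theorem suppDiamLE_indicator_cube (n : ℕ) (k : Fin N → ℤ) (x : lp (fun _ : Fin N → ℤ => X) p) :
    SuppDiamLE (2 * n) (lp.indicator {j | j - k ∈ cube N n} x) := by
  intro i j hi hj d
  have hik := mem_cube.1 (Set.mem_of_indicator_ne_zero (s := {j | j - k ∈ cube N n}) hi) d
  have hjk := mem_cube.1 (Set.mem_of_indicator_ne_zero (s := {j | j - k ∈ cube N n}) hj) d
  simp only [Pi.sub_apply] at hik hjk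
  push_cast
  calc |i d - j d| = |(i d - k d) - (j d - k d)| := by ring_nf
    _ ≤ |i d - k d| + |j d - k d| := abs_sub _ _
    _ ≤ n + n := add_le_add hik hjk
    _ = 2 * n := by ring

theorem IsBandOperator.apply_eq_apply_indicator_cube {w n : ℕ}
    {B : lp (fun _ : Fin N → ℤ => X) p → lp (fun _ : Fin N → ℤ => Y) p}
    (hB : IsBandOperator w B) (x : lp (fun _ : Fin N → ℤ => X) p) {k i : Fin N → ℤ}
    (hi : i - k ∈ cube N n) :
    B x i = B (lp.indicator {j | j - k ∈ cube N (n + w)} x) i := by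
  refine hB i _ _ fun j hj => (Set.indicator_of_mem ?_ x).symm
  refine mem_cube.2 fun d => ?_
  have hik := mem_cube.1 hi d
  simp only [Pi.sub_apply] at hik ⊢
  push_cast
  calc |j d - k d| = |(i d - k d) - (i d - j d)| := by ring_nf
    _ ≤ |i d - k d| + |i d - j d| := abs_sub _ _
    _ ≤ n + w := add_le_add hik (hj d)

theorem IsBandOperator.card_cube_mul_norm_rpow_le (hp : 0 < p.toReal) {w n : ℕ}
    {B : lp (fun _ : Fin N → ℤ => X) p → lp (fun _ : Fin N → ℤ => Y) p}
    (hB : IsBandOperator w B) {c : ℝ} (hc0 : 0 ≤ c)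
    (hc : ∀ y : lp (fun _ : Fin N → ℤ => X) p, SuppDiamLE (2 * (n + w)) ⇑y → ‖B y‖ ≤ c * ‖y‖)
    (x : lp (fun _ : Fin N → ℤ => X) p) :
    #(cube N n) * ‖B x‖ ^ p.toReal ≤ #(cube N (n + w)) * (c * ‖x‖) ^ p.toReal :=
  lp.card_mul_norm_rpow_le_of_translates hp hc0
    (fun _ _ hi => hB.apply_eq_apply_indicator_cube x hi)
    (fun k => hc _ (suppDiamLE_indicator_cube _ k x))

theorem IsBandOperator.one_sub_mul_opNorm_le [NormedSpace ℝ X] [NormedSpace ℝ Y] [Fact (1 ≤ p)]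
    (hp : p ≠ ⊤) {w n : ℕ}
    {B : lp (fun _ : Fin N → ℤ => X) p →L[ℝ] lp (fun _ : Fin N → ℤ => Y) p}
    (hB : IsBandOperator w B) {δ : ℝ} (hδ : 0 ≤ δ) (hn : (2 * w * N : ℝ) ≤ δ * (2 * n + 1)) :
    (1 - δ) * ‖B‖ ≤ B.opNormOn fun x => SuppDiamLE (2 * (n + w)) ⇑x := by
  set c := B.opNormOn fun x => SuppDiamLE (2 * (n + w)) ⇑x
  have hc0 : 0 ≤ c := B.opNormOn_nonneg _
  rcases le_or_gt 1 δ with hδ1 | hδ1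
  · nlinarith [norm_nonneg B]
  have hq : 1 ≤ p.toReal := by
    simpa using ENNReal.toReal_mono hp (Fact.out : 1 ≤ p)
  have hcard := one_sub_mul_card_cube_le (δ := δ) hn
  have hK : (0 : ℝ) < #(cube N (n + w)) := by rw [card_cube]; positivity
  refine B.mul_opNorm_le_of_forall (by linarith) hc0 fun x => ?_
  have hcubes := hB.card_cube_mul_norm_rpow_le (by linarith) hc0
    (fun y hy => B.norm_apply_le_opNormOn_mul hy) x
  refine mul_le_of_mul_rpow_le (norm_nonneg _) (by positivity) (by linarith) (by linarith) hq ?_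
  refine le_of_mul_le_mul_left ?_ hK
  calc (#(cube N (n + w)) : ℝ) * ((1 - δ) * ‖B x‖ ^ p.toReal)
      = (1 - δ) * #(cube N (n + w)) * ‖B x‖ ^ p.toReal := by ring
    _ ≤ #(cube N n) * ‖B x‖ ^ p.toReal := by gcongr
    _ ≤ _ := hcubes

end Band

/-- Operator norm localization for band operators on `l^p(ℤᴺ, X)`,
`1 ≤ p < ∞`: for every `δ > 0` there is `D ∈ ℕ` (depending only on `δ`, `p`,
`N` and the band-width `w`) such that for every band operator `B` of
band-width at most `w` (i.e. `(Bx)ᵢ` only depends on the entries `xⱼ` with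
`|i - j|_∞ ≤ w`), the supremum of `‖Bx‖/‖x‖` over `x ≠ 0` with support of
diameter at most `D` lies between `(1 - δ)‖B‖` and `‖B‖`. -/
theorem band_operator_norm_localization_lp
    {N : ℕ} {X : Type*} [NormedAddCommGroup X] [NormedSpace ℝ X]
    (p : ENNReal) [Fact (1 ≤ p)] (hp : p ≠ ⊤)
    (w : ℕ) (δ : ℝ) (hδ : 0 < δ) :
    ∃ D : ℕ,
      ∀ B : lp (fun _ : Fin N → ℤ => X) p →L[ℝ] lp (fun _ : Fin N → ℤ => X) p,
        (∀ (i : Fin N → ℤ) (x y : lp (fun _ : Fin N → ℤ => X) p),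
          (∀ j : Fin N → ℤ, (∀ d, |i d - j d| ≤ (w : ℤ)) → x j = y j) →
          B x i = B y i) →
        (1 - δ) * ‖B‖ ≤
            sSup {r : ℝ | ∃ x : lp (fun _ : Fin N → ℤ => X) p, x ≠ 0 ∧
              (∀ i j : Fin N → ℤ, x i ≠ 0 → x j ≠ 0 →
                ∀ d, |i d - j d| ≤ (D : ℤ)) ∧
              r = ‖B x‖ / ‖x‖} ∧
          sSup {r : ℝ | ∃ x : lp (fun _ : Fin N → ℤ => X) p, x ≠ 0 ∧
              (∀ i j : Fin N → ℤ, x i ≠ 0 → x j ≠ 0 →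
                ∀ d, |i d - j d| ≤ (D : ℤ)) ∧
              r = ‖B x‖ / ‖x‖} ≤ ‖B‖ := by
  obtain ⟨n, hn⟩ := exists_nat_ge (2 * w * N / δ)
  have hnδ : (2 * w * N : ℝ) ≤ δ * (2 * n + 1) := by
    rw [div_le_iff₀ hδ] at hn
    nlinarith
  exact ⟨2 * (n + w), fun B hB =>
    ⟨IsBandOperator.one_sub_mul_opNorm_le hp hB hδ.le hnδ, B.opNormOn_le_opNorm _⟩⟩
end
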